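/- arXiv:1602.03111 — 2 statements merged into one kernel-verified Lean document; each statement's English description precedes it below -/
import Mathlib

section
/- Let G be a bidirected tree with seed set S and boost set B. If u ∈ S ∪ B then σ_S(B ∪ {u}) = σ_S(B). If u ∉ S ∪ B, then σ_S(B ∪ {u}) = σ_S(B) + Δap_B(u) + ∑_{v ∈ N(u)} p^B_{uv} · Δap_B(u\v) · g_B(v\u), where Δap_B(u) = ap_{B∪{u}}(u) − ap_B(u) and Δap_B(u\v) = ap_{B∪{u}}(u\v) − ap_B(u\v). -/
open Finset
open scoped Classical

noncomputable section

variable {V : Type*}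

/-- The probability weight of the live-edge configuration `L ⊆ E`:
each edge `e ∈ E` is independently live with probability `p e`. -/
def edgeWeight [DecidableEq V] (E : Finset (V × V)) (p : V × V → ℝ)
    (L : Finset (V × V)) : ℝ :=
  (∏ e ∈ L, p e) * ∏ e ∈ E \ L, (1 - p e)

/-- `v` is activated in configuration `L`: it is reachable from some seed in `S`
through live (directed) edges. -/
def Reaches (L : Finset (V × V)) (S : Finset V) (v : V) : Prop :=
  ∃ s ∈ S, Relation.ReflTransGen (fun a b => (a, b) ∈ L) s v

/-- Activation probability of node `v` under the live-edge model with edge set `E`,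
edge probabilities `p`, and seed set `S`. -/
def ap [Fintype V] [DecidableEq V] (E : Finset (V × V)) (p : V × V → ℝ)
    (S : Finset V) (v : V) : ℝ :=
  ∑ L ∈ E.powerset, edgeWeight E p L * (if Reaches L S v then 1 else 0)

/-- Expected number of activated nodes lying in the node set `W`. -/
def spreadOn [Fintype V] [DecidableEq V] (E : Finset (V × V)) (p : V × V → ℝ)
    (S W : Finset V) : ℝ :=
  ∑ L ∈ E.powerset, edgeWeight E p L * ((W.filter (fun v => Reaches L S v)).card : ℝ)

/-- The influence spread `σ_S`: expected total number of activated nodes. -/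
def spread [Fintype V] [DecidableEq V] (E : Finset (V × V)) (p : V × V → ℝ)
    (S : Finset V) : ℝ :=
  spreadOn E p S Finset.univ

/-- Boosted edge probabilities: edges pointing into a boosted node use `p'`. -/
def pB (p p' : V × V → ℝ) (B : Finset V) : V × V → ℝ :=
  fun e => if e.2 ∈ B then p' e else p e

/-- The bidirected edge set of an undirected graph: each undirected edge is
replaced by the two directed edges. -/
def treeEdges [Fintype V] [DecidableEq V] (T : SimpleGraph V) [DecidableRel T.Adj] :
    Finset (V × V) :=
  Finset.univ.filter (fun e => T.Adj e.1 e.2)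

/-- `apSub E p S v u` is `ap_B(v\u)`: the activation probability of `v` in the
subtree `G_{v\u}` obtained by removing the directed edges `(u,v)` and `(v,u)`. -/
def apSub [Fintype V] [DecidableEq V] (E : Finset (V × V)) (p : V × V → ℝ)
    (S : Finset V) (v u : V) : ℝ :=
  ap (E \ {(u, v), (v, u)}) p S v

/-- The set of nodes of the connected component containing `v` w.r.t. edge set `E`. -/
def comp [Fintype V] [DecidableEq V] (E : Finset (V × V)) (v : V) : Finset V :=
  Finset.univ.filter (fun w => Relation.ReflTransGen (fun a b => (a, b) ∈ E) v w)

/-- `gain E p S v u` is `g_B(v\u)`: in the subtree `G_{v\u}`, the expected number of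
activated nodes when the seed set is `(S ∩ V(G_{v\u})) ∪ {v}` minus the expected
number when the seed set is `S ∩ V(G_{v\u})`. -/
def gain [Fintype V] [DecidableEq V] (E : Finset (V × V)) (p : V × V → ℝ)
    (S : Finset V) (v u : V) : ℝ :=
  spreadOn (E \ {(u, v), (v, u)}) p (insert v (S ∩ comp (E \ {(u, v), (v, u)}) v))
      (comp (E \ {(u, v), (v, u)}) v)
    - spreadOn (E \ {(u, v), (v, u)}) p (S ∩ comp (E \ {(u, v), (v, u)}) v)
      (comp (E \ {(u, v), (v, u)}) v)

/-
Boosting `u` changes only the probabilities of the edges entering `u`. Removing `u` splits the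
tree into the branches `G_{w\u}`, `w ∈ N(u)`, so `σ_S(B)` is `ap_B(u)` plus the activation
probabilities of the nodes of the branches. Since `(u, w)` and `(w, u)` are the only edges
between the branch `W` at `w` and the rest, a node `v ∈ W` is activated iff it is reached from a
seed inside `W`, or `u` is activated in `G_{u\w}`, the edge `(u, w)` is live, and `v` is reached
from `w` inside `W`. These events live on the disjoint edge sets of `G_{u\w}`, `{(u, w)}` and
`G_{w\u}`, hence are independent, and only `ap_B(u\w)` changes when `u` is boosted; summing over
`v ∈ W` turns the last factor into `g_B(w\u)`. For a seed `u` every activation probability of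
`u` is `1`, so nothing changes.
-/

theorem Finset.sum_powerset_union_of_disjoint {α M : Type*} [DecidableEq α] [AddCommMonoid M]
    {s t : Finset α} (h : Disjoint s t) (f : Finset α → M) :
    ∑ L ∈ (s ∪ t).powerset, f L = ∑ A ∈ s.powerset, ∑ B ∈ t.powerset, f (A ∪ B) := by
  rw [← Finset.sum_product']
  refine Finset.sum_nbij' (fun L => (L ∩ s, L ∩ t)) (fun P => P.1 ∪ P.2) ?_ ?_ ?_ ?_ ?_
  · intro L _
    simp [Finset.inter_subset_right]
  · intro P hP
    simp only [Finset.mem_product, Finset.mem_powerset] at hP ⊢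
    exact Finset.union_subset_union hP.1 hP.2
  · intro L hL
    simp only [Finset.mem_powerset] at hL
    rw [← Finset.inter_union_distrib_left, Finset.inter_eq_left.2 hL]
  · intro P hP
    simp only [Finset.mem_product, Finset.mem_powerset] at hP
    ext x <;> simp only [Finset.mem_inter, Finset.mem_union] <;>
      grind [Finset.disjoint_left]
  · intro L hL
    simp only [Finset.mem_powerset] at hL
    rw [← Finset.inter_union_distrib_left, Finset.inter_eq_left.2 hL]

section LiveEdge

variable [DecidableEq V]

def liveExpect (E : Finset (V × V)) (p : V × V → ℝ) (f : Finset (V × V) → ℝ) : ℝ :=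
  ∑ L ∈ E.powerset, edgeWeight E p L * f L

variable {E E₁ E₂ : Finset (V × V)} {p : V × V → ℝ}

theorem liveExpect_one : liveExpect E p (fun _ => 1) = 1 := by
  simp only [liveExpect, edgeWeight, mul_one]
  rw [← Finset.prod_add p (fun e => 1 - p e) E]
  simp

theorem liveExpect_add (f g : Finset (V × V) → ℝ) :
    liveExpect E p (fun L => f L + g L) = liveExpect E p f + liveExpect E p g := by
  simp only [liveExpect, mul_add, Finset.sum_add_distrib]

theorem liveExpect_sub (f g : Finset (V × V) → ℝ) :
    liveExpect E p (fun L => f L - g L) = liveExpect E p f - liveExpect E p g := by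
  simp only [liveExpect, mul_sub, Finset.sum_sub_distrib]

theorem liveExpect_congr_prob {q : V × V → ℝ} (h : ∀ e ∈ E, p e = q e)
    (f : Finset (V × V) → ℝ) : liveExpect E p f = liveExpect E q f := by
  refine Finset.sum_congr rfl fun L hL => ?_
  have hL : L ⊆ E := Finset.mem_powerset.1 hL
  simp only [edgeWeight]
  rw [Finset.prod_congr rfl fun e he => h e (hL he),
    Finset.prod_congr rfl fun e he => congrArg (1 - ·) (h e (Finset.sdiff_subset he))]

theorem edgeWeight_union {L₁ L₂ : Finset (V × V)} (h : Disjoint E₁ E₂)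
    (hL₁ : L₁ ⊆ E₁) (hL₂ : L₂ ⊆ E₂) :
    edgeWeight (E₁ ∪ E₂) p (L₁ ∪ L₂) = edgeWeight E₁ p L₁ * edgeWeight E₂ p L₂ := by
  have hsdiff : (E₁ ∪ E₂) \ (L₁ ∪ L₂) = (E₁ \ L₁) ∪ (E₂ \ L₂) := by
    ext e
    simp only [Finset.mem_sdiff, Finset.mem_union]
    grind [Finset.disjoint_left]
  rw [edgeWeight, edgeWeight, edgeWeight, hsdiff,
    Finset.prod_union ((h.mono_left hL₁).mono_right hL₂),
    Finset.prod_union ((h.mono_left Finset.sdiff_subset).mono_right Finset.sdiff_subset)]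
  ring

theorem liveExpect_union_mul (h : Disjoint E₁ E₂) (f g : Finset (V × V) → ℝ) :
    liveExpect (E₁ ∪ E₂) p (fun L => f (L ∩ E₁) * g (L ∩ E₂))
      = liveExpect E₁ p f * liveExpect E₂ p g := by
  rw [liveExpect, Finset.sum_powerset_union_of_disjoint h, liveExpect, liveExpect,
    Finset.sum_mul_sum]
  refine Finset.sum_congr rfl fun L₁ hL₁ => Finset.sum_congr rfl fun L₂ hL₂ => ?_
  rw [Finset.mem_powerset] at hL₁ hL₂
  have h₁ : (L₁ ∪ L₂) ∩ E₁ = L₁ := by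
    rw [Finset.union_inter_distrib_right, Finset.inter_eq_left.2 hL₁,
      Finset.disjoint_iff_inter_eq_empty.1 (h.symm.mono_left hL₂), Finset.union_empty]
  have h₂ : (L₁ ∪ L₂) ∩ E₂ = L₂ := by
    rw [Finset.union_inter_distrib_right, Finset.inter_eq_left.2 hL₂,
      Finset.disjoint_iff_inter_eq_empty.1 (h.mono_left hL₁), Finset.empty_union]
  rw [h₁, h₂, edgeWeight_union h hL₁ hL₂]
  ring

theorem liveExpect_inter (h : E₁ ⊆ E) (f : Finset (V × V) → ℝ) :
    liveExpect E p (fun L => f (L ∩ E₁)) = liveExpect E₁ p f := by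
  have := liveExpect_union_mul (p := p) (Finset.disjoint_sdiff (s := E₁) (t := E)) f (fun _ => 1)
  simpa only [Finset.union_sdiff_of_subset h, liveExpect_one, mul_one] using this

theorem liveExpect_mul_inter (hd : Disjoint E₁ E₂) (h₁ : E₁ ⊆ E) (h₂ : E₂ ⊆ E)
    (f g : Finset (V × V) → ℝ) :
    liveExpect E p (fun L => f (L ∩ E₁) * g (L ∩ E₂)) = liveExpect E₁ p f * liveExpect E₂ p g := by
  rw [← liveExpect_union_mul hd, ← liveExpect_inter (Finset.union_subset h₁ h₂)]
  simp only [Finset.inter_assoc, Finset.union_inter_cancel_left, Finset.union_inter_cancel_right]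

theorem liveExpect_mem_singleton (e : V × V) :
    liveExpect {e} p (fun L => if e ∈ L then 1 else 0) = p e := by
  rw [← insert_empty_eq e, liveExpect, Finset.powerset_insert]
  simp [edgeWeight]

theorem liveExpect_mul_mul_inter {E₃ : Finset (V × V)} (h₁₂ : Disjoint E₁ E₂)
    (h₁₃ : Disjoint E₁ E₃) (h₂₃ : Disjoint E₂ E₃) (h₁ : E₁ ⊆ E) (h₂ : E₂ ⊆ E) (h₃ : E₃ ⊆ E)
    (f g h : Finset (V × V) → ℝ) :
    liveExpect E p (fun L => f (L ∩ E₁) * g (L ∩ E₂) * h (L ∩ E₃))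
      = liveExpect E₁ p f * liveExpect E₂ p g * liveExpect E₃ p h := by
  have := liveExpect_mul_inter (p := p) (Finset.disjoint_union_left.2 ⟨h₁₃, h₂₃⟩)
    (Finset.union_subset h₁ h₂) h₃ (fun M => f (M ∩ E₁) * g (M ∩ E₂)) h
  rw [liveExpect_union_mul h₁₂] at this
  simpa only [Finset.inter_assoc, Finset.union_inter_cancel_left,
    Finset.union_inter_cancel_right] using this

end LiveEdge

theorem reflTransGen_mem_mono {L L' : Finset (V × V)} (h : L ⊆ L') {a b : V}
    (hab : Relation.ReflTransGen (fun x y => (x, y) ∈ L) a b) :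
    Relation.ReflTransGen (fun x y => (x, y) ∈ L') a b :=
  Relation.ReflTransGen.mono (fun _ _ hxy => h hxy) _ _ hab

theorem Reaches.mono {L L' : Finset (V × V)} (h : L ⊆ L') {S : Finset V} {v : V}
    (hv : Reaches L S v) : Reaches L' S v :=
  let ⟨s, hs, hsv⟩ := hv
  ⟨s, hs, reflTransGen_mem_mono h hsv⟩

theorem reaches_of_mem {L : Finset (V × V)} {S : Finset V} {v : V} (hv : v ∈ S) :
    Reaches L S v :=
  ⟨v, hv, .refl⟩

def inducedEdges (E : Finset (V × V)) (P : V → Prop) : Finset (V × V) :=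
  E.filter (fun e => P e.1 ∧ P e.2)

theorem mem_inducedEdges {E : Finset (V × V)} {P : V → Prop} {e : V × V} :
    e ∈ inducedEdges E P ↔ e ∈ E ∧ P e.1 ∧ P e.2 :=
  Finset.mem_filter

theorem inducedEdges_subset (E : Finset (V × V)) (P : V → Prop) : inducedEdges E P ⊆ E :=
  Finset.filter_subset _ _

section Reaches

variable [DecidableEq V]

theorem reaches_insert {L : Finset (V × V)} {S : Finset V} {a v : V} :
    Reaches L (insert a S) v ↔
      Relation.ReflTransGen (fun x y => (x, y) ∈ L) a v ∨ Reaches L S v := by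
  simp [Reaches]

theorem mem_inter_inducedEdges {E L : Finset (V × V)} (hL : L ⊆ E) {P : V → Prop} {x y : V} :
    (x, y) ∈ L ∩ inducedEdges E P ↔ (x, y) ∈ L ∧ P x ∧ P y := by
  rw [Finset.mem_inter, mem_inducedEdges]
  exact ⟨fun h => ⟨h.1, h.2.2⟩, fun h => ⟨h.1, hL h.1, h.2⟩⟩

theorem inducedEdges_subset_sdiff_pair {E : Finset (V × V)} {P : V → Prop}
    {u w : V} (h : ¬(P u ∧ P w)) : inducedEdges E P ⊆ E \ {(u, w), (w, u)} := by
  intro e he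
  obtain ⟨heE, h₁, h₂⟩ := mem_inducedEdges.1 he
  refine Finset.mem_sdiff.2 ⟨heE, ?_⟩
  simp only [Finset.mem_insert, Finset.mem_singleton]
  rintro (rfl | rfl)
  exacts [h ⟨h₁, h₂⟩, h ⟨h₂, h₁⟩]

end Reaches

section Activation

variable [Fintype V] [DecidableEq V] {E : Finset (V × V)} {p q : V × V → ℝ} {S W : Finset V}
  {u v w : V}

theorem ap_eq_liveExpect : ap E p S v = liveExpect E p (fun L => if Reaches L S v then 1 else 0) :=
  rfl

theorem ap_congr_prob (h : ∀ e ∈ E, p e = q e) (S : Finset V) (v : V) :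
    ap E p S v = ap E q S v :=
  liveExpect_congr_prob h _

theorem ap_of_mem (hv : v ∈ S) : ap E p S v = 1 := by
  simp only [ap_eq_liveExpect, reaches_of_mem hv, if_true]
  exact liveExpect_one

theorem spreadOn_eq_sum_ap :
    spreadOn E p S W = ∑ v ∈ W, ap E p S v := by
  simp only [spreadOn, ap, Finset.card_filter, Nat.cast_sum, Nat.cast_ite, Nat.cast_one,
    Nat.cast_zero, Finset.mul_sum]
  exact Finset.sum_comm

theorem apSub_eq :
    apSub E p S u w = ap (E \ {(u, w), (w, u)}) p S u := by
  rw [apSub, Finset.pair_comm]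

theorem gain_eq_sum :
    gain E p S w u = ∑ v ∈ comp (E \ {(u, w), (w, u)}) w,
      (ap (E \ {(u, w), (w, u)}) p (insert w (S ∩ comp (E \ {(u, w), (w, u)}) w)) v
        - ap (E \ {(u, w), (w, u)}) p (S ∩ comp (E \ {(u, w), (w, u)}) w) v) := by
  rw [gain, spreadOn_eq_sum_ap, spreadOn_eq_sum_ap, Finset.sum_sub_distrib]

end Activation

namespace Relation.ReflTransGen

variable {α : Type*} {r : α → α → Prop} {P : α → Prop} {a b : α}

theorem exists_last_entry (h : ReflTransGen r a b) (hb : P b) :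
    (P a ∧ ReflTransGen (fun x y => r x y ∧ P x ∧ P y) a b) ∨
      ∃ x y, ¬P x ∧ P y ∧ ReflTransGen r a x ∧ r x y ∧
        ReflTransGen (fun x y => r x y ∧ P x ∧ P y) y b := by
  induction h with
  | refl => exact Or.inl ⟨hb, .refl⟩
  | @tail c d hac hcd ih =>
    by_cases hc : P c
    · rcases ih hc with ⟨ha, hac⟩ | ⟨x, y, hx, hy, hax, hxy, hyc⟩
      · exact Or.inl ⟨ha, hac.tail ⟨hcd, hc, hb⟩⟩
      · exact Or.inr ⟨x, y, hx, hy, hax, hxy, hyc.tail ⟨hcd, hc, hb⟩⟩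
    · exact Or.inr ⟨c, d, hc, hb, hac, hcd, .refl⟩

theorem exists_first_exit (h : ReflTransGen r a b) (ha : P a) :
    (P b ∧ ReflTransGen (fun x y => r x y ∧ P x ∧ P y) a b) ∨
      ∃ x y, P x ∧ ¬P y ∧ ReflTransGen (fun x y => r x y ∧ P x ∧ P y) a x ∧ r x y ∧
        ReflTransGen r y b := by
  induction h using Relation.ReflTransGen.head_induction_on with
  | refl => exact Or.inl ⟨ha, .refl⟩
  | @head a c hac hcb ih =>
    by_cases hc : P c
    · rcases ih hc with ⟨hb, hcb'⟩ | ⟨x, y, hx, hy, hcx, hxy, hyb⟩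
      · exact Or.inl ⟨hb, .head ⟨hac, ha, hc⟩ hcb'⟩
      · exact Or.inr ⟨x, y, hx, hy, .head ⟨hac, ha, hc⟩ hcx, hxy, hyb⟩
    · exact Or.inr ⟨a, c, ha, hc, .refl, hac, hcb⟩

theorem restrict_of_closed (hclosed : ∀ x y, r x y → P x → P y) (h : ReflTransGen r a b)
    (ha : P a) : P b ∧ ReflTransGen (fun x y => r x y ∧ P x ∧ P y) a b := by
  rcases h.exists_first_exit ha with hb | ⟨x, y, hx, hy, -, hxy, -⟩
  · exact hb
  · exact absurd (hclosed x y hxy hx) hy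

theorem restrict_of_gate {g : α} (hexit : ∀ x y, r x y → P x → ¬P y → x = g)
    (hentry : ∀ x y, r x y → ¬P x → P y → y = g) (h : ReflTransGen r a b) (ha : P a)
    (hb : P b) : ReflTransGen (fun x y => r x y ∧ P x ∧ P y) a b := by
  rcases h.exists_first_exit ha with ⟨-, hab⟩ | ⟨x, y, hx, hy, hax, hxy, -⟩
  · exact hab
  rcases h.exists_last_entry hb with ⟨-, hab⟩ | ⟨x', y', hx', hy', -, hxy', hyb⟩
  · exact hab
  rw [hexit x y hxy hx hy] at hax
  rw [hentry x' y' hxy' hx' hy'] at hyb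
  exact hax.trans hyb

end Relation.ReflTransGen

section Cut

variable [DecidableEq V]

structure IsEdgeCut (E : Finset (V × V)) (W : Finset V) (u w : V) : Prop where
  not_mem : u ∉ W
  mem : w ∈ W
  mem_iff_mem : ∀ a b, (a, b) ∈ E \ {(u, w), (w, u)} → (a ∈ W ↔ b ∈ W)

namespace IsEdgeCut

variable {E L : Finset (V × V)} {W : Finset V} {u w a b : V}

theorem eq_of_exit (hc : IsEdgeCut E W u w) (hab : (a, b) ∈ E) (ha : a ∈ W) (hb : b ∉ W) :
    a = w ∧ b = u := by
  by_cases hp : (a, b) ∈ ({(u, w), (w, u)} : Finset (V × V))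
  · simp only [Finset.mem_insert, Finset.mem_singleton, Prod.mk.injEq] at hp
    rcases hp with ⟨rfl, -⟩ | hp
    · exact absurd ha hc.not_mem
    · exact hp
  · exact absurd ((hc.mem_iff_mem a b (Finset.mem_sdiff.2 ⟨hab, hp⟩)).1 ha) hb

theorem eq_of_entry (hc : IsEdgeCut E W u w) (hab : (a, b) ∈ E) (ha : a ∉ W) (hb : b ∈ W) :
    a = u ∧ b = w := by
  by_cases hp : (a, b) ∈ ({(u, w), (w, u)} : Finset (V × V))
  · simp only [Finset.mem_insert, Finset.mem_singleton, Prod.mk.injEq] at hp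
    rcases hp with hp | ⟨-, rfl⟩
    · exact hp
    · exact absurd hb hc.not_mem
  · exact absurd ((hc.mem_iff_mem a b (Finset.mem_sdiff.2 ⟨hab, hp⟩)).2 hb) ha

theorem reflTransGen_inside (hc : IsEdgeCut E W u w) (hL : L ⊆ E)
    (h : Relation.ReflTransGen (fun x y => (x, y) ∈ L) a b) (ha : a ∈ W) (hb : b ∈ W) :
    Relation.ReflTransGen (fun x y => (x, y) ∈ L ∩ inducedEdges E (· ∈ W)) a b := by
  refine Relation.ReflTransGen.mono (fun x y hxy => (mem_inter_inducedEdges hL).2 hxy) _ _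
    (h.restrict_of_gate (g := w) ?_ ?_ ha hb)
  · exact fun x y hxy hx hy => (hc.eq_of_exit (hL hxy) hx hy).1
  · exact fun x y hxy hx hy => (hc.eq_of_entry (hL hxy) hx hy).2

theorem reflTransGen_outside (hc : IsEdgeCut E W u w) (hL : L ⊆ E)
    (h : Relation.ReflTransGen (fun x y => (x, y) ∈ L) a b) (ha : a ∉ W) (hb : b ∉ W) :
    Relation.ReflTransGen (fun x y => (x, y) ∈ L ∩ inducedEdges E (· ∉ W)) a b := by
  refine Relation.ReflTransGen.mono (fun x y hxy => (mem_inter_inducedEdges hL).2 hxy) _ _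
    (h.restrict_of_gate (P := (· ∉ W)) (g := u) ?_ ?_ ha hb)
  · exact fun x y hxy hx hy => (hc.eq_of_entry (hL hxy) hx (not_not.1 hy)).1
  · exact fun x y hxy hx hy => (hc.eq_of_exit (hL hxy) (not_not.1 hx) hy).2

theorem reaches_iff (hc : IsEdgeCut E W u w) (hL : L ⊆ E) (S : Finset V) {v : V}
    (hv : v ∈ W) :
    Reaches L S v ↔ Reaches (L ∩ inducedEdges E (· ∈ W)) (S ∩ W) v ∨
      ((u, w) ∈ L ∧ Reaches (L ∩ inducedEdges E (· ∉ W)) S u ∧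
        Relation.ReflTransGen (fun x y => (x, y) ∈ L ∩ inducedEdges E (· ∈ W)) w v) := by
  constructor
  · rintro ⟨s, hs, hsv⟩
    by_cases hsW : s ∈ W
    · exact Or.inl ⟨s, Finset.mem_inter.2 ⟨hs, hsW⟩, hc.reflTransGen_inside hL hsv hsW hv⟩
    obtain ⟨x, y, hx, hy, hsx, hxy, hyv⟩ :=
      (hsv.exists_last_entry (P := (· ∈ W)) hv).resolve_left fun h => hsW h.1
    obtain ⟨rfl, rfl⟩ := hc.eq_of_entry (hL hxy) hx hy
    exact Or.inr ⟨hxy, ⟨s, hs, hc.reflTransGen_outside hL hsx hsW hx⟩,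
      Relation.ReflTransGen.mono (fun x y hxy => (mem_inter_inducedEdges hL).2 hxy) _ _ hyv⟩
  · rintro (hv | ⟨huw, hu, hwv⟩)
    · obtain ⟨s, hs, hsv⟩ := hv.mono Finset.inter_subset_left
      exact ⟨s, (Finset.mem_inter.1 hs).1, hsv⟩
    · obtain ⟨s, hs, hsu⟩ := hu.mono Finset.inter_subset_left
      exact ⟨s, hs, (hsu.tail huw).trans (reflTransGen_mem_mono Finset.inter_subset_left hwv)⟩

theorem reaches_inside_iff (hc : IsEdgeCut E W u w) (hL : L ⊆ E) {S : Finset V} (hS : S ⊆ W)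
    {v : V} (hv : v ∈ W) : Reaches L S v ↔ Reaches (L ∩ inducedEdges E (· ∈ W)) S v :=
  ⟨fun ⟨s, hs, hsv⟩ => ⟨s, hs, hc.reflTransGen_inside hL hsv (hS hs) hv⟩,
    (·.mono Finset.inter_subset_left)⟩

theorem reaches_outside_iff (hc : IsEdgeCut E W u w) (hL : L ⊆ E \ {(u, w), (w, u)})
    (S : Finset V) : Reaches L S u ↔ Reaches (L ∩ inducedEdges E (· ∉ W)) S u := by
  refine ⟨fun ⟨s, hs, hsu⟩ => ⟨s, hs, ?_⟩, (·.mono Finset.inter_subset_left)⟩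
  have hsW : s ∉ W := fun hsW => hc.not_mem
    (hsu.restrict_of_closed (fun x y hxy => (hc.mem_iff_mem x y (hL hxy)).1) hsW).1
  exact hc.reflTransGen_outside (hL.trans Finset.sdiff_subset) hsu hsW hc.not_mem

end IsEdgeCut

end Cut

-- Phrased through `P ↔ _` and `Q ↔ _` so that it applies whatever `Decidable` instances the
-- `if`s carry.
theorem ite_eq_of_iff_or_and {P Q A X C D : Prop} [Decidable P] [Decidable Q] [Decidable A]
    [Decidable X] [Decidable C] (hP : P ↔ A ∨ X ∧ C ∧ D) (hQ : Q ↔ D ∨ A) :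
    (if P then (1 : ℝ) else 0) = (if A then 1 else 0)
      + (if C then 1 else 0) * (if X then 1 else 0)
        * ((if Q then 1 else 0) - if A then 1 else 0) := by
  by_cases A <;> by_cases X <;> by_cases C <;> by_cases D <;> simp_all

namespace IsEdgeCut

variable [Fintype V] [DecidableEq V] {E : Finset (V × V)} {W : Finset V} {u w : V}

theorem ap_eq_add (hc : IsEdgeCut E W u w) (huw : (u, w) ∈ E) (r : V × V → ℝ) (S : Finset V)
    {v : V} (hv : v ∈ W) :
    ap E r S v = ap (inducedEdges E (· ∈ W)) r (S ∩ W) v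
      + ap (inducedEdges E (· ∉ W)) r S u * r (u, w)
        * (ap (inducedEdges E (· ∈ W)) r (insert w (S ∩ W)) v
          - ap (inducedEdges E (· ∈ W)) r (S ∩ W) v) := by
  set EW := inducedEdges E (· ∈ W)
  set EU := inducedEdges E (· ∉ W)
  have hindicator : ∀ L ∈ E.powerset, (if Reaches L S v then (1 : ℝ) else 0)
      = (if Reaches (L ∩ EW) (S ∩ W) v then 1 else 0)
        + (if Reaches (L ∩ EU) S u then 1 else 0) * (if (u, w) ∈ L ∩ {(u, w)} then 1 else 0)
          * ((if Reaches (L ∩ EW) (insert w (S ∩ W)) v then 1 else 0)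
            - if Reaches (L ∩ EW) (S ∩ W) v then 1 else 0) := by
    intro L hL
    refine ite_eq_of_iff_or_and ?_ reaches_insert
    rw [hc.reaches_iff (Finset.mem_powerset.1 hL) S hv, Finset.mem_inter,
      and_iff_left (Finset.mem_singleton_self _)]
  have hUW : Disjoint EU EW :=
    Finset.disjoint_left.2 fun _ h₁ h₂ => (mem_inducedEdges.1 h₁).2.1 (mem_inducedEdges.1 h₂).2.1
  have hUe : Disjoint EU {(u, w)} :=
    Finset.disjoint_singleton_right.2 fun h => (mem_inducedEdges.1 h).2.2 hc.mem
  have heW : Disjoint {(u, w)} EW :=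
    Finset.disjoint_singleton_left.2 fun h => hc.not_mem (mem_inducedEdges.1 h).2.1
  rw [ap_eq_liveExpect, liveExpect, Finset.sum_congr rfl fun L hL => congrArg _ (hindicator L hL),
    ← liveExpect, liveExpect_add,
    liveExpect_inter (f := fun M => if Reaches M (S ∩ W) v then 1 else 0) (inducedEdges_subset _ _),
    liveExpect_mul_mul_inter hUe hUW heW (inducedEdges_subset _ _)
      (Finset.singleton_subset_iff.2 huw) (inducedEdges_subset _ _)
      (fun M => if Reaches M S u then 1 else 0) (fun M => if (u, w) ∈ M then 1 else 0)
      (fun M => (if Reaches M (insert w (S ∩ W)) v then 1 else 0)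
        - if Reaches M (S ∩ W) v then 1 else 0),
    liveExpect_mem_singleton, liveExpect_sub]
  rfl

theorem ap_sdiff_pair_eq_inside (hc : IsEdgeCut E W u w) (r : V × V → ℝ) {S : Finset V}
    (hS : S ⊆ W) {v : V} (hv : v ∈ W) :
    ap (E \ {(u, w), (w, u)}) r S v = ap (inducedEdges E (· ∈ W)) r S v := by
  rw [ap_eq_liveExpect, ap_eq_liveExpect,
    ← liveExpect_inter (inducedEdges_subset_sdiff_pair fun h => hc.not_mem h.1)]
  refine Finset.sum_congr rfl fun L hL => ?_
  simp only [hc.reaches_inside_iff ((Finset.mem_powerset.1 hL).trans Finset.sdiff_subset) hS hv]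

theorem ap_sdiff_pair_eq_outside (hc : IsEdgeCut E W u w) (r : V × V → ℝ) (S : Finset V) :
    ap (E \ {(u, w), (w, u)}) r S u = ap (inducedEdges E (· ∉ W)) r S u := by
  rw [ap_eq_liveExpect, ap_eq_liveExpect,
    ← liveExpect_inter (inducedEdges_subset_sdiff_pair (P := (· ∉ W)) fun h => h.2 hc.mem)]
  refine Finset.sum_congr rfl fun L hL => ?_
  simp only [hc.reaches_outside_iff (Finset.mem_powerset.1 hL) S]

theorem sum_ap_eq (hc : IsEdgeCut E W u w) (huw : (u, w) ∈ E) {q q' : V × V → ℝ}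
    (hW : ∀ e ∈ inducedEdges E (· ∈ W), q' e = q e) (huw' : q' (u, w) = q (u, w))
    (S : Finset V) :
    ∑ v ∈ W, ap E q' S v = ∑ v ∈ W, ap E q S v
      + q (u, w) * (ap (E \ {(u, w), (w, u)}) q' S u - ap (E \ {(u, w), (w, u)}) q S u)
        * ∑ v ∈ W, (ap (E \ {(u, w), (w, u)}) q (insert w (S ∩ W)) v
          - ap (E \ {(u, w), (w, u)}) q (S ∩ W) v) := by
  rw [Finset.mul_sum, ← Finset.sum_add_distrib]
  refine Finset.sum_congr rfl fun v hv => ?_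
  have hins : insert w (S ∩ W) ⊆ W := Finset.insert_subset hc.mem Finset.inter_subset_right
  rw [hc.ap_eq_add huw q' S hv, hc.ap_eq_add huw q S hv, ap_congr_prob hW (S ∩ W),
    ap_congr_prob hW (insert w (S ∩ W)), huw', hc.ap_sdiff_pair_eq_inside q hins hv,
    hc.ap_sdiff_pair_eq_inside q Finset.inter_subset_right hv, hc.ap_sdiff_pair_eq_outside q',
    hc.ap_sdiff_pair_eq_outside q]
  ring

end IsEdgeCut

section Tree

variable [Fintype V] [DecidableEq V] {T : SimpleGraph V} [DecidableRel T.Adj] {u w x : V}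

/-- The node set of `G_{w\u}`. -/
def side (T : SimpleGraph V) [DecidableRel T.Adj] (w u : V) : Finset V :=
  comp (treeEdges T \ {(u, w), (w, u)}) w

theorem mem_treeEdges {a b : V} : (a, b) ∈ treeEdges T ↔ T.Adj a b := by
  simp [treeEdges]

theorem mem_treeEdges_sdiff_pair {a b : V} :
    (a, b) ∈ treeEdges T \ {(u, w), (w, u)} ↔ (T.deleteEdges {s(u, w)}).Adj a b := by
  simp only [Finset.mem_sdiff, mem_treeEdges, Finset.mem_insert, Finset.mem_singleton,
    Prod.mk.injEq, SimpleGraph.deleteEdges_adj, Set.mem_singleton_iff, Sym2.eq_iff]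

theorem mem_side : x ∈ side T w u ↔ (T.deleteEdges {s(u, w)}).Reachable w x := by
  have : (fun a b => (a, b) ∈ treeEdges T \ {(u, w), (w, u)}) = (T.deleteEdges {s(u, w)}).Adj := by
    ext a b
    exact mem_treeEdges_sdiff_pair
  simp only [side, comp, Finset.mem_filter, Finset.mem_univ, true_and, this,
    SimpleGraph.reachable_iff_reflTransGen]

theorem isEdgeCut_side (hT : T.IsAcyclic) (h : T.Adj u w) :
    IsEdgeCut (treeEdges T) (side T w u) u w where
  not_mem hu := SimpleGraph.isAcyclic_iff_forall_adj_isBridge.1 hT h (mem_side.1 hu).symm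
  mem := mem_side.2 (SimpleGraph.Reachable.refl _)
  mem_iff_mem a b hab := by
    have hab := (mem_treeEdges_sdiff_pair.1 hab).reachable
    rw [mem_side, mem_side]
    exact ⟨(·.trans hab), (·.trans hab.symm)⟩

theorem mem_side_of_reflTransGen
    (h : Relation.ReflTransGen (fun a b => T.Adj a b ∧ a ≠ u ∧ b ≠ u) w x) :
    x ∈ side T w u := by
  refine mem_side.2 ((SimpleGraph.reachable_iff_reflTransGen _ _).2
    (Relation.ReflTransGen.mono (fun a b hab => ?_) _ _ h))
  simp only [SimpleGraph.deleteEdges_adj, Set.mem_singleton_iff, Sym2.eq_iff, hab.1, true_and]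
  tauto

theorem reflTransGen_of_mem_side (hT : T.IsAcyclic) (h : T.Adj u w) (hx : x ∈ side T w u) :
    Relation.ReflTransGen (fun a b => T.Adj a b ∧ a ≠ u ∧ b ≠ u) w x := by
  have hclosed : ∀ a b, (T.deleteEdges {s(u, w)}).Adj a b → a ∈ side T w u → b ∈ side T w u :=
    fun a b hab ha => mem_side.2 ((mem_side.1 ha).trans hab.reachable)
  have hu := (isEdgeCut_side hT h).not_mem
  refine Relation.ReflTransGen.mono (fun a b hab => ?_) _ _
    ((SimpleGraph.reachable_iff_reflTransGen _ _).1 (mem_side.1 hx) |>.restrict_of_closed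
      hclosed (isEdgeCut_side hT h).mem).2
  exact ⟨(SimpleGraph.deleteEdges_adj.1 hab.1).1, ne_of_mem_of_not_mem hab.2.1 hu,
    ne_of_mem_of_not_mem hab.2.2 hu⟩

theorem exists_adj_mem_side (hT : T.Connected) (hx : x ≠ u) : ∃ w, T.Adj u w ∧ x ∈ side T w u := by
  obtain ⟨y, z, hy, hz, -, hyz, hzx⟩ :=
    ((SimpleGraph.reachable_iff_reflTransGen u x).1 (hT.preconnected u x)).exists_last_entry
      (P := (· ≠ u)) hx |>.resolve_left fun h => h.1 rfl
  rw [not_ne_iff] at hy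
  subst hy
  exact ⟨z, hyz, mem_side_of_reflTransGen hzx⟩

theorem disjoint_side (hT : T.IsAcyclic) {w' : V} (hw : T.Adj u w) (hw' : T.Adj u w')
    (hne : w ≠ w') : Disjoint (side T w u) (side T w' u) := by
  refine Finset.disjoint_left.2 fun x hx hx' => (isEdgeCut_side hT hw).not_mem ?_
  have hxw' := Relation.reflTransGen_swap.2 (reflTransGen_of_mem_side hT hw' hx')
  have hww' : w' ∈ side T w u := mem_side_of_reflTransGen <|
    (reflTransGen_of_mem_side hT hw hx).trans <|
      Relation.ReflTransGen.mono (fun a b hab => ⟨hab.1.symm, hab.2.2, hab.2.1⟩) _ _ hxw'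
  refine (isEdgeCut_side hT hw).mem_iff_mem w' u ?_ |>.1 hww'
  rw [mem_treeEdges_sdiff_pair, SimpleGraph.deleteEdges_adj]
  simp only [Set.mem_singleton_iff, Sym2.eq_iff]
  exact ⟨hw'.symm, fun h => h.elim (fun h => hw'.ne' h.1) (fun h => hne h.1.symm)⟩

theorem spread_eq_ap_add_sum_side (hT : T.IsTree) (r : V × V → ℝ) (S : Finset V) (u : V) :
    spread (treeEdges T) r S = ap (treeEdges T) r S u
      + ∑ w ∈ T.neighborFinset u, ∑ v ∈ side T w u, ap (treeEdges T) r S v := by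
  have hcover : Finset.univ.erase u = (T.neighborFinset u).biUnion (side T · u) := by
    ext x
    simp only [Finset.mem_erase, Finset.mem_univ, and_true, Finset.mem_biUnion,
      SimpleGraph.mem_neighborFinset]
    refine ⟨fun hx => exists_adj_mem_side hT.connected hx, ?_⟩
    rintro ⟨w, hw, hx⟩ rfl
    exact (isEdgeCut_side hT.isAcyclic hw).not_mem hx
  rw [spread, spreadOn_eq_sum_ap, ← Finset.add_sum_erase _ _ (Finset.mem_univ u), hcover,
    Finset.sum_biUnion fun w hw w' hw' hne =>
      disjoint_side hT.isAcyclic (by simpa using hw) (by simpa using hw') hne]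

theorem spread_eq_of_eq_off_inEdges (hT : T.IsTree) {q q' : V × V → ℝ}
    (hq : ∀ e : V × V, e.2 ≠ u → q' e = q e) (S : Finset V) :
    spread (treeEdges T) q' S = spread (treeEdges T) q S
      + (ap (treeEdges T) q' S u - ap (treeEdges T) q S u)
      + ∑ w ∈ T.neighborFinset u, q (u, w)
          * (apSub (treeEdges T) q' S u w - apSub (treeEdges T) q S u w)
          * gain (treeEdges T) q S w u := by
  have hbranch : ∀ w ∈ T.neighborFinset u,
      ∑ v ∈ side T w u, ap (treeEdges T) q' S v = ∑ v ∈ side T w u, ap (treeEdges T) q S v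
        + q (u, w) * (apSub (treeEdges T) q' S u w - apSub (treeEdges T) q S u w)
          * gain (treeEdges T) q S w u := by
    intro w hw
    have hw := (SimpleGraph.mem_neighborFinset _ _ _).1 hw
    have hc := isEdgeCut_side hT.isAcyclic hw
    rw [hc.sum_ap_eq (mem_treeEdges.2 hw)
      (fun e he => hq e fun he2 => hc.not_mem (he2 ▸ (mem_inducedEdges.1 he).2.2))
      (hq _ hw.ne') S, apSub_eq, apSub_eq, gain_eq_sum]
    rfl
  rw [spread_eq_ap_add_sum_side hT q' S u, spread_eq_ap_add_sum_side hT q S u,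
    Finset.sum_congr rfl hbranch, Finset.sum_add_distrib]
  ring

end Tree

theorem spread_insert_boost_general [Fintype V] [DecidableEq V]
    (T : SimpleGraph V) [DecidableRel T.Adj] (hT : T.IsTree)
    (p p' : V × V → ℝ)
    (S B : Finset V) (u : V) :
    (u ∈ S ∪ B →
      spread (treeEdges T) (pB p p' (insert u B)) S =
        spread (treeEdges T) (pB p p' B) S) ∧
    (u ∉ S ∪ B →
      spread (treeEdges T) (pB p p' (insert u B)) S =
        spread (treeEdges T) (pB p p' B) S
          + (ap (treeEdges T) (pB p p' (insert u B)) S u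
              - ap (treeEdges T) (pB p p' B) S u)
          + ∑ v ∈ T.neighborFinset u,
              pB p p' B (u, v)
                * (apSub (treeEdges T) (pB p p' (insert u B)) S u v
                    - apSub (treeEdges T) (pB p p' B) S u v)
                * gain (treeEdges T) (pB p p' B) S v u) := by
  have hmarginal := spread_eq_of_eq_off_inEdges hT (u := u) (q := pB p p' B)
    (q' := pB p p' (insert u B)) (fun e he => by simp [pB, he]) S
  refine ⟨fun hu => ?_, fun _ => hmarginal⟩
  rcases Finset.mem_union.1 hu with huS | huB
  · simp only [hmarginal, apSub, ap_of_mem huS, sub_self, mul_zero, zero_mul,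
      Finset.sum_const_zero, add_zero]
  · rw [Finset.insert_eq_of_mem huB]

/-- Marginal gain of boosting one more node on a bidirected tree.
If `u ∈ S ∪ B` then `σ_S(B ∪ {u}) = σ_S(B)`; if `u ∉ S ∪ B` then
`σ_S(B ∪ {u}) = σ_S(B) + Δap_B(u) + ∑_{v ∈ N(u)} p^B_{uv} · Δap_B(u\v) · g_B(v\u)`,
where `Δap_B(u) = ap_{B∪{u}}(u) − ap_B(u)` and
`Δap_B(u\v) = ap_{B∪{u}}(u\v) − ap_B(u\v)`. -/
theorem spread_insert_boost [Fintype V] [DecidableEq V]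
    (T : SimpleGraph V) [DecidableRel T.Adj] (hT : T.IsTree)
    (p p' : V × V → ℝ)
    (hp0 : ∀ e, 0 ≤ p e) (hpp' : ∀ e, p e ≤ p' e) (hp'1 : ∀ e, p' e ≤ 1)
    (S B : Finset V) (u : V) :
    (u ∈ S ∪ B →
      spread (treeEdges T) (pB p p' (insert u B)) S =
        spread (treeEdges T) (pB p p' B) S) ∧
    (u ∉ S ∪ B →
      spread (treeEdges T) (pB p p' (insert u B)) S =
        spread (treeEdges T) (pB p p' B) S
          + (ap (treeEdges T) (pB p p' (insert u B)) S u
              - ap (treeEdges T) (pB p p' B) S u)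
          + ∑ v ∈ T.neighborFinset u,
              pB p p' B (u, v)
                * (apSub (treeEdges T) (pB p p' (insert u B)) S u v
                    - apSub (treeEdges T) (pB p p' B) S u v)
                * gain (treeEdges T) (pB p p' B) S v u) :=
  spread_insert_boost_general T hT p p' S B u

end
end

section
/- Let G be a bidirected tree with seed set S and boost set B, let v be a node with neighbor u, and suppose v receives external influence through u independently with probability q (that is, in addition to the live-edge process inside G_{v\u}, an independent Bernoulli(q) event activates v). Then the expected number of activated nodes in G_{v\u} equals E₀ + q · g_B(v\u), where E₀ is the expected number of activated nodes in G_{v\u} with seed set S ∩ V(G_{v\u}) alone; i.e., the expected count is an affine function of q with slope g_B(v\u). -/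
open Finset
open scoped Classical

noncomputable section

variable {V : Type*}

/-- The subtree `G_{v\u}` extended with an external influence source (`none`)
that points to `v`: edges of `E \ {(u,v),(v,u)}` (embedded via `some`) plus the
edge `(none, some v)`. -/
def extEdges [Fintype V] [DecidableEq V] (E : Finset (V × V)) (v u : V) :
    Finset (Option V × Option V) :=
  ((E \ {(u, v), (v, u)}).image fun e =>
      ((some e.1 : Option V), (some e.2 : Option V))) ∪
    {((none : Option V), (some v : Option V))}

/-- Edge probabilities on the extended subtree: the external edge `(none, some v)`
is live with probability `q`; every embedded edge `(some a, some b)` keeps its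
probability `p (a, b)`. -/
def extP (p : V × V → ℝ) (v : V) (q : ℝ) : Option V × Option V → ℝ :=
  fun e => match e with
  | (none, some w) => if w = v then q else 0
  | (some a, some b) => p (a, b)
  | _ => 0

/-
Condition on the external edge `(none, some v)`: when it is dead (probability `1 - q`) the
extended process is the process on `G_{v\u}` with seeds `S ∩ V(G_{v\u})`, since the
source `none` has no other out-edge; when it is live (probability `q`) it is the same
process with `v` added to the seeds. Hence the expected count is
`(1 - q) E₀ + q E₁ = E₀ + q (E₁ - E₀)`, and `E₁ - E₀` is the gain `g_B(v\u)`.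
-/

section EdgeWeight

variable [DecidableEq V] {β : Type*} [DecidableEq β]

theorem edgeWeight_image {g : V × V → β × β} (hg : Function.Injective g)
    (E L : Finset (V × V)) (p : β × β → ℝ) :
    edgeWeight (E.image g) p (L.image g) = edgeWeight E (p ∘ g) L := by
  unfold edgeWeight
  rw [← image_sdiff _ _ hg, prod_image hg.injOn, prod_image hg.injOn]
  rfl

theorem edgeWeight_insert_of_notMem {E L : Finset (V × V)} {e : V × V} (heE : e ∉ E)
    (heL : e ∉ L) (p : V × V → ℝ) :
    edgeWeight (insert e E) p L = (1 - p e) * edgeWeight E p L := by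
  unfold edgeWeight
  rw [insert_sdiff_of_notMem _ heL, prod_insert (fun h => heE (mem_sdiff.1 h).1)]
  ring

theorem edgeWeight_insert_insert {E L : Finset (V × V)} {e : V × V} (heE : e ∉ E)
    (heL : e ∉ L) (p : V × V → ℝ) :
    edgeWeight (insert e E) p (insert e L) = p e * edgeWeight E p L := by
  unfold edgeWeight
  rw [insert_sdiff_insert, sdiff_insert_of_notMem heE, prod_insert heL]
  ring

theorem sum_powerset_image_mul_edgeWeight {g : V × V → β × β} (hg : Function.Injective g)
    (E : Finset (V × V)) (p : β × β → ℝ) (F : Finset (β × β) → ℝ) :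
    ∑ L ∈ (E.image g).powerset, edgeWeight (E.image g) p L * F L =
      ∑ L ∈ E.powerset, edgeWeight E (p ∘ g) L * F (L.image g) := by
  rw [powerset_image, sum_image fun _ _ _ _ h => image_injective hg h]
  exact sum_congr rfl fun L _ => by rw [edgeWeight_image hg]

theorem sum_powerset_insert_mul_edgeWeight {E : Finset (V × V)} {e : V × V} (he : e ∉ E)
    (p : V × V → ℝ) (F : Finset (V × V) → ℝ) :
    ∑ L ∈ (insert e E).powerset, edgeWeight (insert e E) p L * F L =
      (1 - p e) * ∑ L ∈ E.powerset, edgeWeight E p L * F L +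
        p e * ∑ L ∈ E.powerset, edgeWeight E p L * F (insert e L) := by
  have heL : ∀ L ∈ E.powerset, e ∉ L := fun L hL h => he (mem_powerset.1 hL h)
  rw [sum_powerset_insert he, mul_sum, mul_sum]
  congr 1
  · exact sum_congr rfl fun L hL => by rw [edgeWeight_insert_of_notMem he (heL L hL), mul_assoc]
  · exact sum_congr rfl fun L hL => by rw [edgeWeight_insert_insert he (heL L hL), mul_assoc]

end EdgeWeight

section Reaches

variable {L : Finset (V × V)} {S : Finset V} {x : V}

theorem reaches_insert_iff_of_forall_notMem [DecidableEq V] {a : V} (ha : ∀ b, (a, b) ∉ L)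
    (hx : x ≠ a) :
    Reaches L (insert a S) x ↔ Reaches L S x := by
  refine ⟨fun ⟨s, hs, h⟩ => ?_, fun ⟨s, hs, h⟩ => ⟨s, mem_insert_of_mem hs, h⟩⟩
  rcases mem_insert.1 hs with rfl | hs
  · rcases h.cases_head with rfl | ⟨c, hsc, -⟩
    exacts [absurd rfl hx, absurd hsc (ha c)]
  · exact ⟨s, hs, h⟩

theorem reaches_insert_edge_iff [DecidableEq V] {a b : V} (ha : a ∈ S) :
    Reaches (insert (a, b) L) S x ↔ Reaches L (insert b S) x := by
  constructor
  · rintro ⟨s, hs, h⟩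
    induction h with
    | refl => exact ⟨s, mem_insert_of_mem hs, .refl⟩
    | tail _ hcd ih =>
      obtain ⟨t, ht, htc⟩ := ih
      rcases mem_insert.1 hcd with hcd | hcd
      · obtain ⟨-, rfl⟩ := Prod.mk.inj hcd
        exact ⟨_, mem_insert_self _ _, .refl⟩
      · exact ⟨t, ht, htc.tail hcd⟩
  · rintro ⟨s, hs, h⟩
    have h' : Relation.ReflTransGen (fun c d => (c, d) ∈ insert (a, b) L) s x :=
      Relation.ReflTransGen.mono (fun _ _ => mem_insert_of_mem) _ _ h
    rcases mem_insert.1 hs with rfl | hs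
    · exact ⟨a, ha, .head (mem_insert_self _ _) h'⟩
    · exact ⟨s, hs, h'⟩

theorem reaches_image_iff {β : Type*} [DecidableEq β] {f : V → β} (hf : Function.Injective f) :
    Reaches (L.image (Prod.map f f)) (S.image f) (f x) ↔ Reaches L S x := by
  refine ⟨fun ⟨_, hfs, h⟩ => ?_, fun ⟨s, hs, h⟩ =>
    ⟨f s, mem_image_of_mem f hs, h.lift f fun a b hab => mem_image_of_mem (Prod.map f f) hab⟩⟩
  obtain ⟨s, hs, rfl⟩ := mem_image.1 hfs
  have hpull : ∀ {y}, Relation.ReflTransGen (fun a b => (a, b) ∈ L.image (Prod.map f f))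
      (f s) y → ∃ z, y = f z ∧ Relation.ReflTransGen (fun a b => (a, b) ∈ L) s z := by
    intro y h
    induction h with
    | refl => exact ⟨s, rfl, .refl⟩
    | tail _ hcd ih =>
      obtain ⟨z, rfl, hz⟩ := ih
      obtain ⟨⟨a, b⟩, hab, heq⟩ := mem_image.1 hcd
      obtain ⟨ha, rfl⟩ := Prod.ext_iff.1 heq
      exact ⟨b, rfl, hz.tail (hf ha ▸ hab)⟩
  obtain ⟨z, hz, h⟩ := hpull h
  exact ⟨s, hs, hf hz ▸ h⟩

theorem reaches_some_iff [DecidableEq V] :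
    Reaches (L.image (Prod.map some some)) (insert none (S.image some)) (some x) ↔
      Reaches L S x := by
  rw [reaches_insert_iff_of_forall_notMem (by simp) (Option.some_ne_none x),
    reaches_image_iff (Option.some_injective V)]

end Reaches

theorem card_filter_image_some [DecidableEq V] (W : Finset V) (P : Option V → Prop) :
    ((W.image some).filter P).card = (W.filter fun x => P (some x)).card := by
  rw [filter_image, card_image_of_injective _ (Option.some_injective V)]

theorem spreadOn_insert_source [Fintype V] [DecidableEq V] (E : Finset (V × V))
    (p : V × V → ℝ) (S W : Finset V) (v : V) (q : ℝ) :
    spreadOn (insert (none, some v) (E.image (Prod.map some some))) (extP p v q)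
        (insert none (S.image some)) (W.image some) =
      (1 - q) * spreadOn E p S W + q * spreadOn E p (insert v S) W := by
  have hfresh : ((none : Option V), some v) ∉ E.image (Prod.map some some) := by simp
  have hg : Function.Injective (Prod.map (@some V) some) :=
    (Option.some_injective V).prodMap (Option.some_injective V)
  have hdead : ∀ L : Finset (V × V), ((W.image some).filter
      (fun y => Reaches (L.image (Prod.map some some)) (insert none (S.image some)) y)).card =
      (W.filter fun x => Reaches L S x).card := fun L => by
    simp only [card_filter_image_some, reaches_some_iff]
  have hlive : ∀ L : Finset (V × V), ((W.image some).filter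
      (fun y => Reaches (insert (none, some v) (L.image (Prod.map some some)))
        (insert none (S.image some)) y)).card = (W.filter fun x => Reaches L (insert v S) x).card :=
    fun L => by
      simp only [card_filter_image_some, reaches_insert_edge_iff (mem_insert_self _ _),
        insert_comm (some v), ← image_insert, reaches_some_iff]
  unfold spreadOn
  rw [sum_powerset_insert_mul_edgeWeight hfresh, sum_powerset_image_mul_edgeWeight hg,
    sum_powerset_image_mul_edgeWeight hg]
  have hq : extP p v q (none, some v) = q := if_pos rfl
  have hp : extP p v q ∘ Prod.map some some = p := rfl
  simp only [hdead, hlive, hq, hp]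

theorem expected_count_affine_in_external_general [Fintype V] [DecidableEq V]
    (T : SimpleGraph V) [DecidableRel T.Adj]
    (p p' : V × V → ℝ)
    (S B : Finset V) (u v : V)
    (q : ℝ) :
    spreadOn (extEdges (treeEdges T) v u) (extP (pB p p' B) v q)
        (insert (none : Option V)
          (((S ∩ comp (treeEdges T \ {(u, v), (v, u)}) v).image
            (fun w => (some w : Option V)))))
        ((comp (treeEdges T \ {(u, v), (v, u)}) v).image
          (fun w => (some w : Option V))) =
      spreadOn (treeEdges T \ {(u, v), (v, u)}) (pB p p' B)
          (S ∩ comp (treeEdges T \ {(u, v), (v, u)}) v)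
          (comp (treeEdges T \ {(u, v), (v, u)}) v)
        + q * gain (treeEdges T) (pB p p' B) S v u := by
  have hext : extEdges (treeEdges T) v u =
      insert (none, some v) ((treeEdges T \ {(u, v), (v, u)}).image (Prod.map some some)) := by
    rw [extEdges, union_comm]
    rfl
  rw [hext, spreadOn_insert_source, gain]
  ring

/-- Linearity of the expected activated count in the external influence
probability: if, in addition to the live-edge process inside `G_{v\u}` (seeds
`S ∩ V(G_{v\u})`), node `v` receives external influence independently with
probability `q`, then the expected number of activated nodes in `G_{v\u}` equals
`E₀ + q · g_B(v\u)`, where `E₀` is the expected number of activated nodes in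
`G_{v\u}` with seed set `S ∩ V(G_{v\u})` alone. -/
theorem expected_count_affine_in_external [Fintype V] [DecidableEq V]
    (T : SimpleGraph V) [DecidableRel T.Adj] (hT : T.IsTree)
    (p p' : V × V → ℝ)
    (hp0 : ∀ e, 0 ≤ p e) (hpp' : ∀ e, p e ≤ p' e) (hp'1 : ∀ e, p' e ≤ 1)
    (S B : Finset V) (u v : V) (hv : T.Adj u v)
    (q : ℝ) (hq0 : 0 ≤ q) (hq1 : q ≤ 1) :
    spreadOn (extEdges (treeEdges T) v u) (extP (pB p p' B) v q)
        (insert (none : Option V)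
          (((S ∩ comp (treeEdges T \ {(u, v), (v, u)}) v).image
            (fun w => (some w : Option V)))))
        ((comp (treeEdges T \ {(u, v), (v, u)}) v).image
          (fun w => (some w : Option V))) =
      spreadOn (treeEdges T \ {(u, v), (v, u)}) (pB p p' B)
          (S ∩ comp (treeEdges T \ {(u, v), (v, u)}) v)
          (comp (treeEdges T \ {(u, v), (v, u)}) v)
        + q * gain (treeEdges T) (pB p p' B) S v u :=
  expected_count_affine_in_external_general T p p' S B u v q

end
end
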